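/- arXiv:2007.15312 — 3 statements merged into one kernel-verified Lean document; each statement's English description precedes it below -/
import Mathlib

section
/- Let E be a real inner product space, let Λ, ν, σ, μ₀ ∈ E and r > 0 with μ₀ = r • Λ. Assume ‖ν‖ = ‖Λ‖, ‖σ‖ ≤ ‖μ₀‖, and ‖ν + σ‖ = ‖Λ + μ₀‖. Then σ = r • ν. -/
open RealInnerProductSpace


/-- Cauchy–Schwarz equality argument (Lemma 5.4 of the paper): if `μ₀ = r • Λ` with
`r > 0`, `‖ν‖ = ‖Λ‖`, `‖σ‖ ≤ ‖μ₀‖` and `‖ν + σ‖ = ‖Λ + μ₀‖`, then `σ = r • ν`. -/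
theorem stmt_0 {E : Type*} [NormedAddCommGroup E] [InnerProductSpace ℝ E]
    (Λ ν σ μ₀ : E) (r : ℝ) (hr : 0 < r) (hμ₀ : μ₀ = r • Λ)
    (h₁ : ‖ν‖ = ‖Λ‖) (h₂ : ‖σ‖ ≤ ‖μ₀‖) (h₃ : ‖ν + σ‖ = ‖Λ + μ₀‖) :
    σ = r • ν := by
  subst hμ₀
  have hμn : ‖r • Λ‖ = r * ‖Λ‖ := by
    rw [norm_smul, Real.norm_eq_abs, abs_of_pos hr]
  have hsum : ‖Λ + r • Λ‖ = (1 + r) * ‖Λ‖ := by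
    have : Λ + r • Λ = (1 + r) • Λ := by
      rw [add_smul, one_smul]
    rw [this, norm_smul, Real.norm_eq_abs, abs_of_pos (by linarith)]
  have htri : ‖ν + σ‖ ≤ ‖ν‖ + ‖σ‖ := norm_add_le _ _
  have hb : ‖σ‖ = r * ‖Λ‖ := by
    rw [h₃, hsum] at htri
    rw [hμn] at h₂
    nlinarith [norm_nonneg σ]
  have heq : ‖ν + σ‖ = ‖ν‖ + ‖σ‖ := by
    rw [h₃, hsum, h₁, hb]; ring
  -- equality in triangle inequality gives inner product equality
  have hinner : (⟪ν, σ⟫ : ℝ) = ‖ν‖ * ‖σ‖ := by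
    have hsq : ‖ν + σ‖ ^ 2 = ‖ν‖ ^ 2 + 2 * (⟪ν, σ⟫ : ℝ) + ‖σ‖ ^ 2 := by
      rw [@norm_add_sq_real]
    have hsq2 : ‖ν + σ‖ ^ 2 = (‖ν‖ + ‖σ‖) ^ 2 := by rw [heq]
    nlinarith
  have hkey : ‖σ‖ • ν = ‖ν‖ • σ :=
    (inner_eq_norm_mul_iff_real).mp hinner
  by_cases hν : ν = 0
  · have : ‖Λ‖ = 0 := by rw [← h₁, hν, norm_zero]
    have hσ0 : ‖σ‖ = 0 := by rw [hb, this]; ring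
    rw [hν, smul_zero, norm_eq_zero.mp hσ0]
  · have hνn : ‖ν‖ ≠ 0 := norm_ne_zero_iff.mpr hν
    have : (r * ‖ν‖) • ν = ‖ν‖ • σ := by
      rw [← hkey, hb, h₁]
    have : ‖ν‖ • (r • ν) = ‖ν‖ • σ := by
      rw [smul_smul, mul_comm]; exact this
    exact (smul_right_injective E hνn this).symm
end

section
/- Let E be a finite-dimensional real normed space, C ⊆ E a closed convex cone, S ⊆ interior(C) a nonempty compact set, and K ⊆ E a compact set. Then there exists n ∈ ℕ such that for all real t ≥ n, the set t • S + K is contained in the interior of C. -/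
/-!
Since `t • S + K = t • (S + t⁻¹ • K)` and `interior C` is stable under positive dilations, it
suffices that `S + ε • K ⊆ interior C` for small `ε`. This holds because the compact set `S`
has a uniform neighbourhood `S + V` inside the open set `interior C`, and the bounded set `K`
is shrunk into `V` by small scalars.
-/

open scoped Pointwise
open Filter Topology

theorem ConvexCone.smul_interior_subset {E : Type*} [AddCommGroup E] [Module ℝ E]
    [TopologicalSpace E] [ContinuousConstSMul ℝ E] (C : ConvexCone ℝ E) {t : ℝ} (ht : 0 < t) :
    t • interior (C : Set E) ⊆ interior (C : Set E) := by
  rw [← interior_smul₀ ht.ne']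
  exact interior_mono (Set.smul_set_subset_iff.2 fun _ hx ↦ C.smul_mem ht hx)

theorem IsCompact.eventually_add_smul_subset {𝕜 E : Type*} [NormedDivisionRing 𝕜]
    [AddCommGroup E] [Module 𝕜 E] [TopologicalSpace E] [IsTopologicalAddGroup E]
    {S U K : Set E} (hS : IsCompact S) (hU : IsOpen U) (hSU : S ⊆ U)
    (hK : Bornology.IsVonNBounded 𝕜 K) :
    ∀ᶠ ε in 𝓝 (0 : 𝕜), S + ε • K ⊆ U := by
  obtain ⟨V, hV, hSV⟩ := compact_open_separated_add_right hS hU hSU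
  filter_upwards [hK.tendsto_smallSets_nhds.eventually (eventually_smallSets_subset.2 hV)]
    with ε hε
  exact (Set.add_subset_add_left hε).trans hSV

theorem stmt_8_general {E : Type*} [NormedAddCommGroup E] [NormedSpace ℝ E]
    (C : ConvexCone ℝ E)
    (S : Set E) (hS : S ⊆ interior (C : Set E))
    (hScomp : IsCompact S) (K : Set E) (hK : IsCompact K) :
    ∃ n : ℕ, ∀ t : ℝ, (n : ℝ) ≤ t → t • S + K ⊆ interior (C : Set E) := by
  have hsmall : ∀ᶠ t : ℝ in atTop, 0 < t ∧ S + t⁻¹ • K ⊆ interior (C : Set E) :=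
    (eventually_gt_atTop 0).and <| tendsto_inv_atTop_zero.eventually
      (hScomp.eventually_add_smul_subset isOpen_interior hS (hK.isVonNBounded ℝ))
  obtain ⟨N, hN⟩ := eventually_atTop.1 hsmall
  refine ⟨⌈N⌉₊, fun t ht ↦ ?_⟩
  obtain ⟨ht₀, hsub⟩ := hN t ((Nat.le_ceil N).trans ht)
  calc t • S + K = t • (S + t⁻¹ • K) := by rw [smul_add, smul_inv_smul₀ ht₀.ne']
    _ ⊆ t • interior (C : Set E) := Set.smul_set_mono hsub
    _ ⊆ interior (C : Set E) := C.smul_interior_subset ht₀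

/-- If `C` is a closed convex cone in a finite-dimensional real normed space,
`S ⊆ interior C` is nonempty compact and `K` is compact, then for all sufficiently
large `t` the set `t • S + K` is contained in the interior of `C`. -/
theorem stmt_8 {E : Type*} [NormedAddCommGroup E] [NormedSpace ℝ E]
    [FiniteDimensional ℝ E]
    (C : ConvexCone ℝ E) (hCcl : IsClosed (C : Set E))
    (S : Set E) (hS : S ⊆ interior (C : Set E)) (hSne : S.Nonempty)
    (hScomp : IsCompact S) (K : Set E) (hK : IsCompact K) :
    ∃ n : ℕ, ∀ t : ℝ, (n : ℝ) ≤ t → t • S + K ⊆ interior (C : Set E) :=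
  stmt_8_general C S hS hScomp K hK
end

section
/- Let V be a module over a commutative ring Z (acting by commuting endomorphisms), finite-dimensional over a field 𝕜 with Z acting 𝕜-linearly, and let χ : Z → 𝕜 be a character. Then the generalized χ-eigenspace W = {v ∈ V : ∀ z ∈ Z, ∃ k, (z - χ(z))^k v = 0} is a Z-submodule of V and is a direct summand of V as a Z-module. -/
/-!
Induct on `dim V`. If some `ρ z` has a proper generalized `χ z`-eigenspace `E`, its Fitting
decomposition `V = E ⊕ C` is `Z`-stable because `Z` is commutative. The simultaneous eigenspace
lies in `E`, so by induction it has a `Z`-stable complement `Q` inside `E`, and `Q ⊕ C` is then a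
`Z`-stable complement in `V`.
-/

open Module Module.End Set

lemma Submodule.mapsTo_sup {R M : Type*} [Semiring R] [AddCommMonoid M] [Module R M]
    {f : End R M} {p q : Submodule R M} (hp : MapsTo f p p) (hq : MapsTo f q q) :
    MapsTo f ↑(p ⊔ q) ↑(p ⊔ q) := by
  intro v hv
  obtain ⟨a, ha, b, hb, rfl⟩ := Submodule.mem_sup.mp hv
  rw [map_add]
  exact Submodule.add_mem_sup (hp ha) (hq hb)

namespace Module.End

lemma exists_isCompl_maxGenEigenspace_forall_mapsTo_of_commute {R M : Type*} [CommRing R]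
    [AddCommGroup M] [Module R M] [IsNoetherian R M] [IsArtinian R M] (f : End R M) (μ : R) :
    ∃ C : Submodule R M, IsCompl (f.maxGenEigenspace μ) C ∧
      ∀ g : End R M, Commute f g → MapsTo g C C := by
  set h := f - μ • 1
  refine ⟨⨅ n, LinearMap.range (h ^ n), ?_, fun g hg v hv => ?_⟩
  · rw [← iSup_genEigenspace_eq]
    simpa only [genEigenspace_nat] using h.isCompl_iSup_ker_pow_iInf_range_pow
  · have hgh : Commute h g := hg.sub_left ((Commute.one_left g).smul_left μ)
    simp only [SetLike.mem_coe, Submodule.mem_iInf] at hv ⊢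
    intro n
    obtain ⟨y, rfl⟩ := hv n
    exact ⟨g y, LinearMap.congr_fun (hgh.pow_left n).eq y⟩

variable {ι K V : Type*} [Field K] [AddCommGroup V] [Module K V] [FiniteDimensional K V]

theorem exists_isCompl_iInf_maxGenEigenspace_of_commute (f : ι → End K V) (μ : ι → K)
    (hf : ∀ i j, Commute (f i) (f j)) :
    ∃ Q : Submodule K V, (∀ i, MapsTo (f i) Q Q) ∧
      IsCompl (⨅ i, (f i).maxGenEigenspace (μ i)) Q := by
  generalize h_dim : finrank K V = n
  induction n using Nat.strongRecOn generalizing V with | ind n ih => ?_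
  by_cases htop : ∀ i, (f i).maxGenEigenspace (μ i) = ⊤
  · exact ⟨⊥, fun i => by simp, by simpa [htop] using isCompl_top_bot⟩
  obtain ⟨i, hi⟩ := not_forall.mp htop
  set E := (f i).maxGenEigenspace (μ i)
  obtain ⟨C, hEC, hC⟩ := exists_isCompl_maxGenEigenspace_forall_mapsTo_of_commute (f i) (μ i)
  have hE (j : ι) : MapsTo (f j) E E := mapsTo_maxGenEigenspace_of_comm (hf i j) _
  obtain ⟨Q, hQ, hpQ⟩ := ih _ (h_dim ▸ Submodule.finrank_lt hi)
    (fun j => (f j).restrict (hE j)) (fun j k => LinearMap.restrict_commute (hf j k) _ _) rfl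
  refine ⟨Q.map E.subtype ⊔ C, fun j => Submodule.mapsTo_sup ?_ (hC _ (hf i j)), ?_⟩
  · rintro _ ⟨y, hy, rfl⟩
    exact ⟨_, hQ j hy, rfl⟩
  · rw [← iInf_maxGenEigenspace_restrict_map_subtype_eq f i hE]
    refine (Submodule.disjoint_map E.injective_subtype hpQ.disjoint)
      |>.isCompl_sup_right_of_isCompl_sup_left ?_
    rwa [← Submodule.map_sup, hpQ.sup_eq_top, Submodule.map_top, Submodule.range_subtype]

end Module.End

/-- Let a commutative algebra `Z` act `𝕜`-linearly on a finite-dimensional vector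
space `V` (via `ρ`), and let `χ : Z → 𝕜` be a character. Then the generalized
`χ`-eigenspace `{v : ∀ z, ∃ k, (ρ z - χ z)^k v = 0}` is a `Z`-stable subspace of `V`
admitting a `Z`-stable complement (i.e. it is a direct summand as a `Z`-module). -/
theorem stmt_13 {𝕜 Z V : Type*} [Field 𝕜] [CommRing Z] [Algebra 𝕜 Z]
    [AddCommGroup V] [Module 𝕜 V] [FiniteDimensional 𝕜 V]
    (ρ : Z →ₐ[𝕜] Module.End 𝕜 V) (χ : Z →ₐ[𝕜] 𝕜)
    (Wset : Set V)
    (hW : Wset = {v : V | ∀ z : Z, ∃ k : ℕ, ((ρ z - χ z • (1 : Module.End 𝕜 V)) ^ k) v = 0}) :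
    ∃ p : Submodule 𝕜 V, (p : Set V) = Wset ∧ (∀ z : Z, ∀ v ∈ p, ρ z v ∈ p) ∧
      ∃ q : Submodule 𝕜 V, (∀ z : Z, ∀ v ∈ q, ρ z v ∈ q) ∧ IsCompl p q := by
  have hcomm (z z' : Z) : Commute (ρ z) (ρ z') := (Commute.all z z').map ρ
  obtain ⟨q, hq, hpq⟩ := exists_isCompl_iInf_maxGenEigenspace_of_commute (ρ ·) (χ ·) hcomm
  refine ⟨⨅ z, (ρ z).maxGenEigenspace (χ z), ?_, fun z v hv => ?_, q, fun z _ hv => hq z hv, hpq⟩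
  · ext v
    simp [hW]
  · rw [Submodule.mem_iInf] at hv ⊢
    exact fun z' => mapsTo_maxGenEigenspace_of_comm (hcomm z' z) _ (hv z')
end
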